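/- arXiv:1906.08377 — 2 statements merged into one kernel-verified Lean document; each statement's English description precedes it below -/
import Mathlib

section
/- Let R be a commutative ring, ζ ∈ R with 1+ζ invertible in R, σ(T) = 1/(1+T) − 1 ∈ R[[T]], f ∈ R[[T]], and m a natural number. If (T − ζ)^m divides f(T) in R[[T]], then (T + ζ·(1+ζ)^{−1})^m divides f(σ(T)) in R[[T]]. -/
open PowerSeries

/-- Substitution of a power series `a` (with zero constant term) into `f`:
the `n`-th coefficient of `f(a)` is `∑_{k ≤ n} f_k · (coeff n of a^k)`
(for `a` of positive order, `coeff n (a^k) = 0` for `k > n`, so this is the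
honest substitution `∑_k f_k a^k`). -/
noncomputable def PSsubst {R : Type*} [CommRing R] (a f : PowerSeries R) : PowerSeries R :=
  PowerSeries.mk fun n => ∑ k ∈ Finset.range (n + 1),
    PowerSeries.coeff k f * PowerSeries.coeff n (a ^ k)

/-- The power series `σ(T) = 1/(1+T) - 1 = -T + T² - T³ + ⋯`. -/
noncomputable def sigmaPS (R : Type*) [CommRing R] : PowerSeries R :=
  PowerSeries.invOfUnit (1 + PowerSeries.X) 1 - 1

section Aux

variable {R : Type*} [CommRing R]

lemma aux_coeff_pow_eq_zero {a : PowerSeries R} (ha : constantCoeff a = 0)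
    {n k : ℕ} (h : n < k) : coeff n (a ^ k) = 0 := by
  have hd : (X : PowerSeries R) ^ k ∣ a ^ k := pow_dvd_pow_of_dvd (X_dvd_iff.mpr ha) k
  exact (X_pow_dvd_iff.mp hd) n h

lemma coeff_PSsubst_eval₂ {a : PowerSeries R} (ha : constantCoeff a = 0)
    (f : PowerSeries R) {n N : ℕ} (h : n < N) :
    coeff n (PSsubst a f) = coeff n (Polynomial.eval₂ C a (trunc N f)) := by
  obtain ⟨M, rfl⟩ : ∃ M, N = M + 1 := ⟨N - 1, by omega⟩
  have hdeg : (trunc (M + 1) f).natDegree < M + 1 := natDegree_trunc_lt f M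
  rw [Polynomial.eval₂_eq_sum_range' C hdeg a, map_sum]
  have key : ∀ k ∈ Finset.range (M + 1),
      coeff n (C ((trunc (M + 1) f).coeff k) * a ^ k)
        = if k ∈ Finset.range (n+1) then coeff k f * coeff n (a ^ k) else 0 := by
    intro k hk
    rw [Finset.mem_range] at hk
    rw [coeff_C_mul, coeff_trunc, if_pos hk]
    by_cases hkn : k ∈ Finset.range (n+1)
    · rw [if_pos hkn]
    · rw [if_neg hkn]
      rw [Finset.mem_range, not_lt] at hkn
      rw [aux_coeff_pow_eq_zero ha (by omega), mul_zero]
  rw [Finset.sum_congr rfl key, Finset.sum_ite_mem,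
    Finset.inter_eq_right.mpr (by intro k hk; rw [Finset.mem_range] at *; omega)]
  simp [PSsubst, coeff_mk]

lemma PSsubst_mul {a : PowerSeries R} (ha : constantCoeff a = 0)
    (f g : PowerSeries R) : PSsubst a (f * g) = PSsubst a f * PSsubst a g := by
  ext n
  set tf := trunc (n+1) f
  set tg := trunc (n+1) g
  have h1 : coeff n (PSsubst a (f * g))
      = coeff n (Polynomial.eval₂ C a (trunc (n+1) (f * g))) :=
    coeff_PSsubst_eval₂ ha _ n.lt_succ_self
  have h2 : trunc (n+1) (f * g) = trunc (n+1) ((tf * tg : Polynomial R) : PowerSeries R) := by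
    rw [← trunc_trunc_mul_trunc, Polynomial.coe_mul]
  set N := (tf * tg).natDegree + n + 2 with hN
  have h3 : coeff n (Polynomial.eval₂ C a (trunc (n+1)
      ((tf * tg : Polynomial R) : PowerSeries R)))
      = coeff n (Polynomial.eval₂ C a (trunc N
      ((tf * tg : Polynomial R) : PowerSeries R))) := by
    rw [← coeff_PSsubst_eval₂ ha ((tf * tg : Polynomial R) : PowerSeries R) n.lt_succ_self,
      ← coeff_PSsubst_eval₂ ha ((tf * tg : Polynomial R) : PowerSeries R) (show n < N by omega)]
  have h4 : trunc N ((tf * tg : Polynomial R) : PowerSeries R) = tf * tg :=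
    trunc_coe_eq_self (by omega)
  rw [h1, h2, h3, h4, Polynomial.eval₂_mul, coeff_mul, coeff_mul]
  refine Finset.sum_congr rfl fun p hp => ?_
  rw [Finset.HasAntidiagonal.mem_antidiagonal] at hp
  rw [← coeff_PSsubst_eval₂ ha f (show p.1 < n + 1 by omega),
    ← coeff_PSsubst_eval₂ ha g (show p.2 < n + 1 by omega)]

lemma PSsubst_pow {a : PowerSeries R} (ha : constantCoeff a = 0)
    (f : PowerSeries R) (m : ℕ) : PSsubst a (f ^ m) = PSsubst a f ^ m := by
  induction m with
  | zero =>
    simp only [pow_zero]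
    ext n
    simp only [PSsubst, coeff_mk]
    rcases Nat.eq_zero_or_pos n with hn | hn
    · subst hn; simp
    · rw [Finset.sum_eq_single 0]
      · simp
      · intro k hk hk0
        rcases k with _ | k
        · omega
        · rw [coeff_one, if_neg (by omega), zero_mul]
      · simp
  | succ m ih => rw [pow_succ, PSsubst_mul ha, ih, pow_succ]

lemma PSsubst_X {a : PowerSeries R} (ha : constantCoeff a = 0) :
    PSsubst a X = a := by
  ext n
  simp only [PSsubst, coeff_mk]
  rcases Nat.eq_zero_or_pos n with hn | hn
  · subst hn; simpa using ha.symm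
  · rw [Finset.sum_eq_single 1]
    · simp
    · intro k hk hk1
      rw [coeff_X, if_neg hk1, zero_mul]
    · intro h; exact absurd (Finset.mem_range.mpr (by omega)) h

lemma PSsubst_C (a : PowerSeries R) (c : R) : PSsubst a (C c) = C c := by
  ext n
  simp only [PSsubst, coeff_mk]
  rw [Finset.sum_eq_single 0]
  · simp [coeff_C]
  · intro k hk hk0
    rw [coeff_C, if_neg hk0, zero_mul]
  · simp

lemma PSsubst_sub {a : PowerSeries R} (f g : PowerSeries R) :
    PSsubst a (f - g) = PSsubst a f - PSsubst a g := by
  ext n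
  simp [PSsubst, coeff_mk, sub_mul, Finset.sum_sub_distrib]

lemma constantCoeff_sigmaPS : constantCoeff (sigmaPS R) = 0 := by
  simp [sigmaPS, map_sub, constantCoeff_invOfUnit]

end Aux

/-- If `(T - ζ)^m` divides `f(T)` and `1+ζ` is invertible, then
`(T + ζ·(1+ζ)⁻¹)^m` divides `f(σ(T))`. -/
theorem pow_dvd_subst_sigma (R : Type*) [CommRing R] (ζ : R) [Invertible (1 + ζ)]
    (f : PowerSeries R) (m : ℕ) (h : (X - C ζ) ^ m ∣ f) :
    (X + C (ζ * ⅟(1 + ζ))) ^ m ∣ PSsubst (sigmaPS R) f := by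
  obtain ⟨q, hq⟩ := h
  have hσ : constantCoeff (sigmaPS R) = 0 := constantCoeff_sigmaPS
  have hsub : PSsubst (sigmaPS R) f
      = (sigmaPS R - C ζ) ^ m * PSsubst (sigmaPS R) q := by
    rw [hq, PSsubst_mul hσ, PSsubst_pow hσ, PSsubst_sub, PSsubst_X hσ, PSsubst_C]
  rw [hsub]
  have hinv : (1 + X : PowerSeries R) * invOfUnit (1 + X) 1 = 1 :=
    mul_invOfUnit _ _ (by simp)
  have hC : C (1 + ζ) * C (ζ * ⅟(1 + ζ)) = C ζ := by
    rw [← map_mul]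
    congr 1
    rw [mul_left_comm, mul_invOf_self, mul_one]
  have key : sigmaPS R - C ζ
      = (X + C (ζ * ⅟(1 + ζ))) * (-(invOfUnit (1 + X) 1) * C (1 + ζ)) := by
    simp only [sigmaPS]
    have hC1 : C (1 + ζ) = 1 + C ζ := by simp [map_add]
    linear_combination (1 + C ζ) * hinv + (invOfUnit (1 + X) 1) * hC
      + (invOfUnit (1 + X) 1 * X) * hC1
  rw [key, mul_pow]
  exact ⟨(-(invOfUnit (1 + X) 1) * C (1 + ζ)) ^ m * PSsubst (sigmaPS R) q, by ring⟩
end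

section
/- (Leading and sub-leading terms from the functional equation) Let p be a prime, Λ = ℤ_p[[T]], and σ(T) = 1/(1+T) − 1 ∈ Λ. Let F ∈ Λ be a nonzero power series with order of vanishing m at T = 0, leading coefficient a (the m-th coefficient) and sub-leading coefficient b (the (m+1)-st coefficient), and suppose F satisfies the functional equation F(T) = c·W(T)·F(σ(T)), where c ∈ ℤ_p satisfies c² = 1 and W ∈ Λ has constant term W(0) = 1. Let w denote the first-order coefficient of W (i.e., w = W'(0)). Then 2b = a·(w − m) in ℤ_p. -/
open PowerSeries

section aux
variable (R : Type*) [CommRing R]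

noncomputable def Iinv : PowerSeries R := PowerSeries.invOfUnit (1 + PowerSeries.X) 1

lemma hI : ((1 + X : PowerSeries R)) * Iinv R = 1 :=
  mul_invOfUnit _ 1 (by simp)

lemma sigmaPS_eq : sigmaPS R = -(X * Iinv R) := by
  have h := hI R
  unfold sigmaPS Iinv at *
  linear_combination h

lemma c0I : constantCoeff (Iinv R) = 1 := by simp [Iinv]

lemma c0Ik (k : ℕ) : constantCoeff ((Iinv R) ^ k) = 1 := by
  simp [map_pow, c0I]

lemma c1I : coeff 1 (Iinv R) = -1 := by
  have h := congrArg (coeff 1) (hI R)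
  simp only [add_mul, one_mul, map_add, coeff_succ_X_mul] at h
  have h0 : coeff 0 (Iinv R) = 1 := by
    simpa [coeff_zero_eq_constantCoeff] using c0I R
  rw [coeff_one] at h
  simp [h0] at h
  linear_combination h

lemma coeff1_mul (f g : PowerSeries R) :
    coeff 1 (f * g) = coeff 0 f * coeff 1 g + coeff 1 f * coeff 0 g := by
  rw [coeff_mul, Finset.Nat.sum_antidiagonal_eq_sum_range_succ_mk]
  simp [Finset.sum_range_succ]

lemma c1Ik (k : ℕ) : coeff 1 ((Iinv R) ^ k) = -(k : R) := by
  induction k with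
  | zero => simp [coeff_one]
  | succ k ih =>
    have h0 : coeff 0 ((Iinv R) ^ k) = 1 := by
      simpa [coeff_zero_eq_constantCoeff] using c0Ik R k
    have h1 : coeff 0 (Iinv R) = 1 := by
      simpa [coeff_zero_eq_constantCoeff] using c0I R
    rw [pow_succ, coeff1_mul, c1I, ih, h0, h1]
    push_cast
    ring

lemma sigma_pow (k : ℕ) :
    (sigmaPS R) ^ k = C ((-1) ^ k) * ((Iinv R) ^ k * X ^ k) := by
  rw [sigmaPS_eq]
  have : C ((-1 : R) ^ k) = ((-1 : PowerSeries R)) ^ k := by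
    simp [map_pow]
  rw [this]
  ring

lemma coeff_sigma_pow (n k : ℕ) :
    coeff n ((sigmaPS R) ^ k) =
      if k ≤ n then (-1) ^ k * coeff (n - k) ((Iinv R) ^ k) else 0 := by
  rw [sigma_pow, coeff_C_mul, coeff_mul_X_pow']
  split <;> simp

lemma coeff_sigma_pow_self (k : ℕ) :
    coeff k ((sigmaPS R) ^ k) = (-1) ^ k := by
  rw [coeff_sigma_pow, if_pos le_rfl, Nat.sub_self]
  have h0 : coeff 0 ((Iinv R) ^ k) = 1 := by
    simpa [coeff_zero_eq_constantCoeff] using c0Ik R k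
  rw [h0, mul_one]

lemma coeff_sigma_pow_succ (k : ℕ) :
    coeff (k + 1) ((sigmaPS R) ^ k) = (-1) ^ k * (-(k : R)) := by
  have h1 : k + 1 - k = 1 := by omega
  rw [coeff_sigma_pow, if_pos (Nat.le_succ k), h1, c1Ik]

lemma coeff_sigma_pow_zero {n k : ℕ} (h : n < k) :
    coeff n ((sigmaPS R) ^ k) = 0 := by
  rw [coeff_sigma_pow, if_neg (by omega)]

end aux

/-- Leading and sub-leading terms from the functional equation: if `F ≠ 0` has
order `m`, leading coefficient `a`, sub-leading coefficient `b`, and satisfies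
`F(T) = c·W(T)·F(σ(T))` with `c² = 1`, `W(0) = 1` and first-order coefficient
`w` of `W`, then `2b = a·(w - m)`. -/
theorem subleading_of_functional_equation (p : ℕ) [Fact p.Prime]
    (F W : PowerSeries ℤ_[p]) (c : ℤ_[p]) (m : ℕ)
    (hF : F ≠ 0) (hm : F.order = m)
    (hc : c ^ 2 = 1) (hW : constantCoeff W = 1)
    (heq : F = C c * W * PSsubst (sigmaPS ℤ_[p]) F)
    (a b w : ℤ_[p])
    (ha : a = PowerSeries.coeff m F)
    (hb : b = PowerSeries.coeff (m + 1) F)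
    (hw : w = PowerSeries.coeff 1 W) :
    2 * b = a * (w - (m : ℤ_[p])) := by
  set G := PSsubst (sigmaPS ℤ_[p]) F with hG
  -- basic facts about F
  obtain ⟨hane', hFlt⟩ := (order_eq_nat).mp hm
  have hane : a ≠ 0 := by rw [ha]; exact hane'
  -- coefficients of G
  have hGcoeff : ∀ n, coeff n G = ∑ k ∈ Finset.range (n + 1),
      coeff k F * coeff n ((sigmaPS ℤ_[p]) ^ k) := fun n => coeff_mk n _
  have hGlt : ∀ j < m, coeff j G = 0 := by
    intro j hj
    rw [hGcoeff]
    refine Finset.sum_eq_zero fun k hk => ?_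
    rw [hFlt k (by have := Finset.mem_range.mp hk; omega), zero_mul]
  have hGm : coeff m G = a * (-1) ^ m := by
    rw [hGcoeff]
    rw [Finset.sum_eq_single m]
    · rw [← ha, coeff_sigma_pow_self]
    · intro k hk hkm
      rw [hFlt k (by simp at hk; omega), zero_mul]
    · intro h; simp at h
  have hGm1 : coeff (m + 1) G = a * ((-1) ^ m * (-(m : ℤ_[p]))) + b * (-1) ^ (m + 1) := by
    rw [hGcoeff]
    rw [Finset.sum_range_succ, Finset.sum_range_succ]
    have hz : ∑ k ∈ Finset.range m, coeff k F * coeff (m + 1) ((sigmaPS ℤ_[p]) ^ k) = 0 :=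
      Finset.sum_eq_zero fun k hk => by
        rw [hFlt k (Finset.mem_range.mp hk), zero_mul]
    rw [hz, zero_add, ← ha, ← hb, coeff_sigma_pow_succ, coeff_sigma_pow_self]
  -- coefficients of the product
  have hW0 : coeff 0 W = 1 := by
    simpa [coeff_zero_eq_constantCoeff] using hW
  have E1 : a = c * (a * (-1) ^ m) := by
    have h := congrArg (coeff m) heq
    rw [mul_assoc, coeff_C_mul, coeff_mul,
      Finset.Nat.sum_antidiagonal_eq_sum_range_succ_mk] at h
    rw [Finset.sum_eq_single 0] at h
    · simp only [Nat.sub_zero] at h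
      rw [hW0, hGm, one_mul, ← ha] at h
      exact h
    · intro k hk hk0
      rw [hGlt (m - k) (by simp at hk; omega), mul_zero]
    · intro h'; simp at h'
  have E2 : b = c * (coeff 0 W * coeff (m + 1) G + coeff 1 W * coeff m G) := by
    have h := congrArg (coeff (m + 1)) heq
    rw [mul_assoc, coeff_C_mul, coeff_mul,
      Finset.Nat.sum_antidiagonal_eq_sum_range_succ_mk] at h
    rw [← Finset.sum_subset (Finset.range_subset_range.mpr (by omega : 2 ≤ m + 1 + 1))
      (fun k hk hk2 => by
        simp only [Finset.mem_range] at hk hk2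
        rw [hGlt (m + 1 - k) (by omega), mul_zero])] at h
    rw [← hb] at h
    rw [h, Finset.sum_range_succ, Finset.sum_range_succ, Finset.sum_range_zero]
    norm_num
  -- the final algebra
  rw [hW0, hGm1, hGm, ← hw] at E2
  have h1 : a * (1 - c * (-1) ^ m) = 0 := by linear_combination E1
  rcases mul_eq_zero.mp h1 with h | h
  · exact absurd h hane
  · have hce : c * (-1 : ℤ_[p]) ^ m = 1 := by linear_combination -h
    rw [pow_succ] at E2
    linear_combination E2 + (w * a - (m : ℤ_[p]) * a - b) * hce
end
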